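/- Any deformation retract can be upgraded to a strong deformation retract: given a deformation retract (p : C → D, i : D → C, h : C → C) of differential modules (p i = id_D, i p − id_C = d^C h + h d^C), there exists a new homotopy h̃ : C → C satisfying i p − id_C = d^C h̃ + h̃ d^C together with the side conditions h̃² = 0, h̃ ∘ i = 0, and p ∘ h̃ = 0. -/
import Mathlib

private lemma strong_aux {A : Type*} [Ring A] (d f g : A)
    (hd : d * d = 0) (hdf : d * f = f * d) (hff : f * f = f)
    (hg : d * g + g * d = f) :
    ∃ k m : A, k = f * m * f ∧ (d * k + k * d = f) ∧ k * k = 0 := by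
  have hfk : f * (f * g * f) = f * g * f := by
    rw [← mul_assoc, ← mul_assoc, hff]
  have hkf : (f * g * f) * f = f * g * f := by
    rw [mul_assoc, hff]
  -- the intermediate homotopy k0 = f*g*f
  have hk1 : d * (f * g * f) + (f * g * f) * d = f := by
    have t1 : d * (f * g * f) = f * (d * g) * f := by
      calc d * (f * g * f) = (d * f) * (g * f) := by noncomm_ring
        _ = (f * d) * (g * f) := by rw [hdf]
        _ = f * (d * g) * f := by noncomm_ring
    have t2 : (f * g * f) * d = f * (g * d) * f := by
      calc (f * g * f) * d = (f * g) * (f * d) := by noncomm_ring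
        _ = (f * g) * (d * f) := by rw [← hdf]
        _ = f * (g * d) * f := by noncomm_ring
    calc d * (f * g * f) + (f * g * f) * d
        = f * (d * g) * f + f * (g * d) * f := by rw [t1, t2]
      _ = f * (d * g + g * d) * f := by noncomm_ring
      _ = f * f * f := by rw [hg]
      _ = f := by rw [hff, hff]
  set k0 : A := f * g * f with hk0
  have hkd : k0 * d = f - d * k0 := eq_sub_of_add_eq' hk1
  have e1 : k0 * d * k0 = k0 - d * (k0 * k0) := by
    rw [hkd, sub_mul, hfk, mul_assoc]
  have e2 : d * (k0 * k0) = k0 - k0 * d * k0 := by rw [e1]; noncomm_ring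
  refine ⟨k0 * d * k0, g * f * d * f * g, by rw [hk0]; noncomm_ring, ?_, ?_⟩
  · have h1 : d * (k0 * d * k0) = d * k0 := by
      calc d * (k0 * d * k0) = (d * k0) * (d * k0) := by noncomm_ring
        _ = (f - k0 * d) * (d * k0) := by rw [← eq_sub_of_add_eq hk1]
        _ = f * d * k0 - k0 * (d * d) * k0 := by noncomm_ring
        _ = d * (f * k0) := by rw [hd, ← hdf]; noncomm_ring
        _ = d * k0 := by rw [hfk]
    have h2 : (k0 * d * k0) * d = k0 * d := by
      calc (k0 * d * k0) * d = (k0 * d) * (k0 * d) := by noncomm_ring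
        _ = (k0 * d) * (f - d * k0) := by rw [← hkd]
        _ = k0 * (d * f) - k0 * (d * d) * k0 := by noncomm_ring
        _ = (k0 * f) * d := by rw [hd, hdf]; noncomm_ring
        _ = k0 * d := by rw [hkf]
    rw [h1, h2, hk1]
  · calc (k0 * d * k0) * (k0 * d * k0)
        = k0 * (d * (k0 * k0)) * (d * k0) := by noncomm_ring
      _ = k0 * (k0 - k0 * d * k0) * (d * k0) := by rw [e2]
      _ = (k0 * k0) * (d * k0 - d * (k0 * d * k0)) := by noncomm_ring
      _ = (k0 * k0) * (d * k0 - d * (k0 - d * (k0 * k0))) := by rw [e1]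
      _ = (k0 * k0) * ((d * d) * (k0 * k0)) := by noncomm_ring
      _ = 0 := by rw [hd, zero_mul, mul_zero]

/-- Any deformation retract of differential modules can be upgraded to a
strong deformation retract: given `(p, i, h)` with `p ∘ i = id` and
`i ∘ p − id = dC h + h dC`, there is a new homotopy `h̃` satisfying the same homotopy
identity together with the side conditions `h̃² = 0`, `h̃ ∘ i = 0` and `p ∘ h̃ = 0`. -/
theorem deformation_retract_strongification
    {R : Type*} [CommRing R] {C D : Type*}
    [AddCommGroup C] [Module R C] [AddCommGroup D] [Module R D]
    (dC : C →ₗ[R] C) (dD : D →ₗ[R] D)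
    (hdC : dC ∘ₗ dC = 0) (hdD : dD ∘ₗ dD = 0)
    (p : C →ₗ[R] D) (i : D →ₗ[R] C)
    (hp : dD ∘ₗ p = p ∘ₗ dC) (hi : dC ∘ₗ i = i ∘ₗ dD)
    (h : C →ₗ[R] C)
    (hpi : p ∘ₗ i = LinearMap.id)
    (hip : i ∘ₗ p - LinearMap.id = dC ∘ₗ h + h ∘ₗ dC) :
    ∃ h' : C →ₗ[R] C,
      (i ∘ₗ p - LinearMap.id = dC ∘ₗ h' + h' ∘ₗ dC) ∧
        h' ∘ₗ h' = 0 ∧ h' ∘ₗ i = 0 ∧ p ∘ₗ h' = 0 := by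
  have hpi' : ∀ x, p (i x) = x := fun x => DFunLike.congr_fun hpi x
  -- basic facts in the endomorphism ring
  have hipip : (i ∘ₗ p : Module.End R C) * (i ∘ₗ p) = i ∘ₗ p := by
    ext x
    simp [Module.End.mul_apply, LinearMap.comp_apply, hpi']
  have hdip : dC * (i ∘ₗ p : Module.End R C) = (i ∘ₗ p) * dC := by
    show dC ∘ₗ (i ∘ₗ p) = (i ∘ₗ p) ∘ₗ dC
    rw [← LinearMap.comp_assoc, hi, LinearMap.comp_assoc, hp, LinearMap.comp_assoc]
  have hdf : dC * (1 - i ∘ₗ p : Module.End R C) = (1 - i ∘ₗ p) * dC := by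
    rw [mul_sub, sub_mul, mul_one, one_mul, hdip]
  have hff : ((1 - i ∘ₗ p : Module.End R C)) * (1 - i ∘ₗ p) = 1 - i ∘ₗ p := by
    rw [sub_mul, mul_sub, mul_sub, one_mul, mul_one, hipip]; noncomm_ring
  have hd' : dC * dC = (0 : Module.End R C) := hdC
  have hg0 : dC * (-h : Module.End R C) + (-h) * dC = 1 - i ∘ₗ p := by
    have hip' : (i ∘ₗ p : Module.End R C) - 1 = dC * h + h * dC := hip
    rw [show (1 : Module.End R C) - i ∘ₗ p = -((i ∘ₗ p) - 1) by noncomm_ring, hip']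
    noncomm_ring
  obtain ⟨k, m, hkm, main, sq⟩ :=
    strong_aux dC (1 - i ∘ₗ p : Module.End R C) (-h) hd' hdf hff hg0
  have hFi : ∀ x, ((1 - i ∘ₗ p : Module.End R C)) (i x) = 0 := by
    intro x
    simp [LinearMap.sub_apply, LinearMap.comp_apply, hpi']
  have hpF : ∀ x, p (((1 - i ∘ₗ p : Module.End R C)) x) = 0 := by
    intro x
    simp [LinearMap.sub_apply, LinearMap.comp_apply, hpi']
  refine ⟨-k, ?_, ?_, ?_, ?_⟩
  · show (i ∘ₗ p : Module.End R C) - 1 = dC * (-k) + (-k) * dC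
    rw [show (i ∘ₗ p : Module.End R C) - 1 = -(1 - i ∘ₗ p) by noncomm_ring, ← main]
    noncomm_ring
  · show (-k : Module.End R C) * (-k) = 0
    rw [neg_mul_neg, sq]
  · ext x
    simp [LinearMap.comp_apply, LinearMap.neg_apply, hkm, Module.End.mul_apply, hFi]
  · ext x
    simp [LinearMap.comp_apply, LinearMap.neg_apply, hkm, Module.End.mul_apply, hpF, hpi']
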